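/- For all integers n ≥ 1 and m ≥ 1, the cardinalities S_n^m := |A_{n,m}| satisfy the recurrence S_n^m = S_{n-1}^m + Σ_{i=0}^{m-1} Σ_{j=2i}^{n-2(m-i)-1} S_{n-2-j}^{m-1-i} · S_j^i. -/
import Mathlib


/-- The alphabet {'(', ')', '*'} for RNA secondary structure words. -/
inductive RSym : Type
  | op : RSym   -- '('
  | cl : RSym   -- ')'
  | st : RSym   -- '*'
  deriving DecidableEq

open RSym List

instance : Fintype RSym :=
  ⟨⟨{op, cl, st}, by simp⟩, by rintro (_|_|_) <;> simp⟩

lemma rlen (l : List RSym) : l.length = l.count op + l.count cl + l.count st := by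
  induction l with
  | nil => simp
  | cons h t ih => cases h <;> simp [List.count_cons, ih] <;> omega

/-- first-return split -/
def rsplit : List RSym → ℕ → Option (List RSym × List RSym)
  | [], _ => none
  | cl :: t, 0 => some ([], t)
  | cl :: t, d+1 => (rsplit t d).map (fun p => (cl :: p.1, p.2))
  | op :: t, d => (rsplit t (d+1)).map (fun p => (op :: p.1, p.2))
  | st :: t, d => (rsplit t d).map (fun p => (st :: p.1, p.2))

lemma rsplit_eq : ∀ (t : List RSym) (d b c), rsplit t d = some (b, c) →
    t = b ++ cl :: c ∧ b.count cl = b.count op + d ∧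
    (∀ p, (b.take p).count cl ≤ (b.take p).count op + d) := by
  intro t
  induction t with
  | nil => intro d b c h; simp [rsplit] at h
  | cons h t ih =>
    intro d b c hs
    cases h with
    | op =>
      simp only [rsplit, Option.map_eq_some_iff] at hs
      obtain ⟨⟨b', c'⟩, hp, he⟩ := hs
      obtain ⟨h1, h2, h3⟩ := ih _ _ _ hp
      simp only [Prod.mk.injEq] at he
      obtain ⟨hb, hc⟩ := he
      subst hb hc
      refine ⟨by simp [h1], by simp [List.count_cons]; omega, ?_⟩
      intro p
      cases p with
      | zero => simp
      | succ q => simp [List.count_cons]; have := h3 q; omega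
    | st =>
      simp only [rsplit, Option.map_eq_some_iff] at hs
      obtain ⟨⟨b', c'⟩, hp, he⟩ := hs
      obtain ⟨h1, h2, h3⟩ := ih _ _ _ hp
      simp only [Prod.mk.injEq] at he
      obtain ⟨hb, hc⟩ := he
      subst hb hc
      refine ⟨by simp [h1], by simp [List.count_cons]; omega, ?_⟩
      intro p
      cases p with
      | zero => simp
      | succ q => simp [List.count_cons]; have := h3 q; omega
    | cl =>
      cases d with
      | zero =>
        simp only [rsplit, Option.some.injEq, Prod.mk.injEq] at hs
        obtain ⟨hb, hc⟩ := hs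
        subst hb hc
        refine ⟨by simp, by simp, by intro p; simp⟩
      | succ d =>
        simp only [rsplit, Option.map_eq_some_iff] at hs
        obtain ⟨⟨b', c'⟩, hp, he⟩ := hs
        obtain ⟨h1, h2, h3⟩ := ih _ _ _ hp
        simp only [Prod.mk.injEq] at he
        obtain ⟨hb, hc⟩ := he
        subst hb hc
        refine ⟨by simp [h1], by simp [List.count_cons]; omega, ?_⟩
        intro p
        cases p with
        | zero => simp
        | succ q => simp [List.count_cons]; have := h3 q; omega

lemma rsplit_isSome : ∀ (t : List RSym) (d), t.count op + d < t.count cl →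
    (rsplit t d).isSome := by
  intro t
  induction t with
  | nil => intro d h; simp at h
  | cons h t ih =>
    intro d hc
    cases h with
    | op =>
      simp only [rsplit]
      have := ih (d+1) (by simp [List.count_cons] at hc ⊢; omega)
      simpa using this
    | st =>
      simp only [rsplit]
      have := ih d (by simp [List.count_cons] at hc ⊢; omega)
      simpa using this
    | cl =>
      cases d with
      | zero => simp [rsplit]
      | succ d =>
        simp only [rsplit]
        have := ih d (by simp [List.count_cons] at hc ⊢; omega)
        simpa using this

lemma not_ext {b x : List RSym} (hb : b.count cl = b.count op)
    (hpre : ∀ p, ((b ++ cl :: x).take p).count cl ≤ ((b ++ cl :: x).take p).count op) :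
    False := by
  have := hpre (b.length + 1)
  rw [show b.length + 1 = b.length + 1 from rfl, List.take_append,
    List.take_of_length_le (by omega)] at this
  simp [List.count_append, List.count_cons] at this
  omega

lemma decomp_unique {b c b' c' : List RSym}
    (hb : b.count cl = b.count op) (hb' : b'.count cl = b'.count op)
    (hpre : ∀ p, (b.take p).count cl ≤ (b.take p).count op)
    (hpre' : ∀ p, (b'.take p).count cl ≤ (b'.take p).count op)
    (heq : b ++ cl :: c = b' ++ cl :: c') : b = b' ∧ c = c' := by
  rcases List.append_eq_append_iff.mp heq with ⟨a', h1, h2⟩ | ⟨a', h1, h2⟩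
  · cases a' with
    | nil => simp at h1 h2; exact ⟨h1.symm, h2⟩
    | cons h t =>
      obtain ⟨rfl, h2⟩ : cl = h ∧ c = t ++ cl :: c' := by simpa using h2
      subst h1
      exact (not_ext hb hpre').elim
  · cases a' with
    | nil => simp at h1 h2; exact ⟨h1, h2.symm⟩
    | cons h t =>
      obtain ⟨rfl, h2⟩ : cl = h ∧ c' = t ++ cl :: c := by simpa using h2
      subst h1
      exact (not_ext hb' hpre).elim

lemma not_end_op {b x : List RSym} (hb : b.count cl = b.count op)
    (hpre : ∀ p, (b.take p).count cl ≤ (b.take p).count op) (hx : b = x ++ [op]) :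
    False := by
  have := hpre x.length
  rw [hx, List.take_append, List.take_of_length_le (by omega)] at this
  simp at this
  rw [hx] at hb
  simp [List.count_append] at hb
  omega

lemma not_start_cl {t : List RSym}
    (hpre : ∀ p, ((cl :: t).take p).count cl ≤ ((cl :: t).take p).count op) :
    False := by
  have := hpre 1
  simp at this

lemma infix_decomp : ∀ (b c : List RSym), [op, cl] <:+: b ++ cl :: c →
    [op, cl] <:+: b ∨ [op, cl] <:+: c ∨ ∃ x, b = x ++ [op] := by
  intro b
  induction b with
  | nil =>
    intro c h
    simp only [List.nil_append] at h
    rcases List.infix_cons_iff.mp h with h | h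
    · obtain ⟨r, hr⟩ := h
      simp at hr
    · exact Or.inr (Or.inl h)
  | cons h t ih =>
    intro c hi
    rcases List.infix_cons_iff.mp hi with hp | hp
    · obtain ⟨r, hr⟩ := hp
      simp only [List.cons_append, List.cons.injEq] at hr
      obtain ⟨rfl, hr⟩ := hr
      cases t with
      | nil =>
        exact Or.inr (Or.inr ⟨[], rfl⟩)
      | cons h' t' =>
        simp only [List.append_eq, List.nil_append, List.cons_append] at hr
        injection hr with h1 h2
        subst h1
        exact Or.inl ⟨[], t', rfl⟩
    · rcases ih c hp with h1 | h1 | ⟨x, hx⟩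
      · exact Or.inl (List.infix_cons h1)
      · exact Or.inr (Or.inl h1)
      · exact Or.inr (Or.inr ⟨h :: x, by simp [hx]⟩)

lemma no_star_factor : ∀ (N : ℕ) (b : List RSym), b.length ≤ N →
    b.count st = 0 → b.count cl = b.count op → b ≠ [] →
    (∀ p, (b.take p).count cl ≤ (b.take p).count op) →
    [op, cl] <:+: b := by
  intro N
  induction N with
  | zero =>
    intro b hl _ _ hne _
    cases b with
    | nil => exact absurd rfl hne
    | cons h t => simp at hl
  | succ N ih =>
    intro b hl hst hbal hne hpre
    cases b with
    | nil => exact absurd rfl hne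
    | cons h t =>
      cases h with
      | cl => exact (not_start_cl hpre).elim
      | st => simp [List.count_cons] at hst
      | op =>
        have hop : t.count op + 0 < t.count cl := by
          have h1 : (op :: t).count op = t.count op + 1 := by simp [List.count_cons]
          have h2 : (op :: t).count cl = t.count cl := by simp [List.count_cons]
          omega
        obtain ⟨⟨b', c'⟩, hs⟩ := Option.isSome_iff_exists.mp (rsplit_isSome t 0 hop)
        obtain ⟨ht, hcnt, hpr⟩ := rsplit_eq t 0 b' c' hs
        cases b' with
        | nil =>
          exact ⟨[], c', by simp [ht]⟩
        | cons hb tb =>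
          have hinf : [op, cl] <:+: (hb :: tb) := by
            apply ih
            · have := congrArg List.length ht
              simp at this ⊢
              simp at hl
              omega
            · have : (hb :: tb).count st ≤ t.count st := by
                apply List.Sublist.count_le
                rw [ht]
                exact List.sublist_append_left _ _
              have h2 : (op :: t).count st = t.count st := by simp [List.count_cons]
              omega
            · omega
            · simp
            · intro p; have := hpr p; omega
          apply List.infix_cons
          rw [ht]
          exact hinf.trans (List.prefix_append _ _).isInfix


/-- `isRNA n m a` : `a` is an RNA secondary structure word of length `n` with `m` base-pairs. -/
def isRNA (n m : ℕ) (a : List RSym) : Prop :=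
  a.length = n ∧
  a.count RSym.op = m ∧
  a.count RSym.cl = m ∧
  (∀ p : ℕ, (a.take p).count RSym.cl ≤ (a.take p).count RSym.op) ∧
  ¬ ([RSym.op, RSym.cl] <:+: a)

/-- `S n m = |A_{n,m}|`, the number of RNA secondary structure words of length `n` with
`m` base-pairs. -/
noncomputable def S (n m : ℕ) : ℕ := {a : List RSym | isRNA n m a}.ncard

lemma isRNA_st {n m : ℕ} {a : List RSym} : isRNA (n+1) m (st :: a) ↔ isRNA n m a := by
  constructor
  · rintro ⟨h1, h2, h3, h4, h5⟩
    refine ⟨by simpa using h1, by simpa [List.count_cons] using h2,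
      by simpa [List.count_cons] using h3, ?_, ?_⟩
    · intro p
      have := h4 (p+1)
      simpa [List.count_cons] using this
    · intro hi
      exact h5 (List.infix_cons hi)
  · rintro ⟨h1, h2, h3, h4, h5⟩
    refine ⟨by simpa using h1, by simpa [List.count_cons] using h2,
      by simpa [List.count_cons] using h3, ?_, ?_⟩
    · intro p
      cases p with
      | zero => simp
      | succ q => have := h4 q; simpa [List.count_cons] using this
    · intro hi
      rcases List.infix_cons_iff.mp hi with hp | hp
      · obtain ⟨r, hr⟩ := hp
        simp at hr
      · exact h5 hp

lemma setA_finite (n m : ℕ) : {a : List RSym | isRNA n m a}.Finite :=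
  (List.finite_length_eq RSym n).subset (fun _ ha => ha.1)

noncomputable def F (n m : ℕ) : Finset (List RSym) := (setA_finite n m).toFinset

lemma mem_F {n m : ℕ} {a : List RSym} : a ∈ F n m ↔ isRNA n m a :=
  Set.Finite.mem_toFinset _

lemma S_eq (n m : ℕ) : S n m = (F n m).card := by
  rw [S, ← Set.ncard_coe_finset]
  congr 1
  exact ((setA_finite n m).coe_toFinset).symm

/-- the image Finset for the op-branch -/
noncomputable def G (n m i j : ℕ) : Finset (List RSym) :=
  ((F (n-2-j) (m-1-i)) ×ˢ (F j i)).image (fun p => op :: p.1 ++ cl :: p.2)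

lemma F_eq (n m : ℕ) (hn : 1 ≤ n) (hm : 1 ≤ m) :
    F n m = (F (n-1) m).image (fun x => st :: x) ∪
      (Finset.range m).biUnion (fun i => (Finset.Ico (2*i) (n - 2*(m-i))).biUnion (G n m i)) := by
  ext a
  rw [Finset.mem_union, mem_F]
  constructor
  · intro ha
    obtain ⟨h1, h2, h3, h4, h5⟩ := ha
    cases a with
    | nil => simp at h1; omega
    | cons h t =>
    cases h with
    | cl => exact (not_start_cl h4).elim
    | st =>
      left
      rw [Finset.mem_image]
      have hn1 : n - 1 = t.length := by simp at h1; omega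
      refine ⟨t, mem_F.mpr ?_, rfl⟩
      rw [hn1]
      exact isRNA_st.mp ⟨by simp, h2, h3, h4, h5⟩
    | op =>
      right
      have hto : t.count op + 1 = m := by
        have : (op :: t).count op = t.count op + 1 := by simp [List.count_cons]
        omega
      have htc : t.count cl = m := by
        have : (op :: t).count cl = t.count cl := by simp [List.count_cons]
        omega
      obtain ⟨⟨b, c⟩, hs⟩ := Option.isSome_iff_exists.mp
        (rsplit_isSome t 0 (by omega))
      obtain ⟨ht, hcnt, hpr⟩ := rsplit_eq t 0 b c hs
      rw [Nat.add_zero] at hcnt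
      subst ht
      -- b nonempty
      have hbne : b ≠ [] := by
        rintro rfl
        exact h5 ⟨[], c, by simp⟩
      -- counts
      have hcap : (op :: (b ++ cl :: c)).count op = 1 + b.count op + c.count op := by
        simp [List.count_cons, List.count_append]; omega
      have hcac : (op :: (b ++ cl :: c)).count cl = b.count cl + 1 + c.count cl := by
        simp [List.count_cons, List.count_append]; omega
      have hccl : c.count cl = c.count op := by omega
      have hbcop : b.count op + c.count op + 1 = m := by omega
      -- take computation
      have htake : ∀ p, (op :: (b ++ cl :: c)).take (b.length + 1 + p + 1)
          = op :: (b ++ cl :: c.take p) := by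
        intro p
        rw [List.take_succ_cons, List.take_append,
          List.take_of_length_le (by omega),
          show b.length + 1 + p - b.length = p + 1 by omega, List.take_succ_cons]
      -- c prefix condition
      have hcp : ∀ p, (c.take p).count cl ≤ (c.take p).count op := by
        intro p
        have h := h4 (b.length + 1 + p + 1)
        rw [htake p] at h
        simp [List.count_cons, List.count_append] at h
        omega
      -- infix freeness
      have hbi : ¬ [op, cl] <:+: b := by
        intro hf
        exact h5 (List.infix_cons (hf.trans (List.prefix_append _ _).isInfix))
      have hci : ¬ [op, cl] <:+: c := by
        intro hf
        refine h5 (List.infix_cons (hf.trans ⟨b ++ [cl], [], by simp⟩))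
      -- b length bound
      have hblen : 2 * b.count op < b.length := by
        have hr := rlen b
        have hlp : 0 < b.length := List.length_pos_iff.mpr hbne
        rcases Nat.eq_zero_or_pos (b.count op) with h0 | h0
        · omega
        · have hst : b.count st ≠ 0 := by
            intro h0'
            exact hbi (no_star_factor b.length b le_rfl h0' (by omega) hbne hpr)
          omega
      have hlen : b.length + c.length + 2 = n := by
        simp at h1; omega
      have hrc := rlen c
      rw [Finset.mem_biUnion]
      refine ⟨c.count op, Finset.mem_range.mpr (by omega), ?_⟩
      rw [Finset.mem_biUnion]
      refine ⟨c.length, Finset.mem_Ico.mpr ⟨by omega, by omega⟩, ?_⟩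
      simp only [G, Finset.mem_image]
      refine ⟨(b, c), Finset.mem_product.mpr
        ⟨mem_F.mpr (show isRNA (n-2-c.length) (m-1-c.count op) b from
          ⟨by omega, by omega, by omega, hpr, hbi⟩),
         mem_F.mpr (show isRNA c.length (c.count op) c from
          ⟨rfl, rfl, hccl, hcp, hci⟩)⟩, rfl⟩
  · rintro (h | h)
    · rw [Finset.mem_image] at h
      obtain ⟨x, hx, rfl⟩ := h
      rw [mem_F] at hx
      have := isRNA_st.mpr hx
      rwa [show n - 1 + 1 = n by omega] at this
    · rw [Finset.mem_biUnion] at h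
      obtain ⟨i, hi, h⟩ := h
      rw [Finset.mem_biUnion] at h
      obtain ⟨j, hj, h⟩ := h
      rw [Finset.mem_range] at hi
      rw [Finset.mem_Ico] at hj
      simp only [G, Finset.mem_image] at h
      obtain ⟨⟨b, c⟩, hbc, rfl⟩ := h
      have hb : b ∈ F (n-2-j) (m-1-i) := (Finset.mem_product.mp hbc).1
      have hc : c ∈ F j i := (Finset.mem_product.mp hbc).2
      rw [mem_F] at hb hc
      show isRNA n m (op :: (b ++ cl :: c))
      obtain ⟨hb1, hb2, hb3, hb4, hb5⟩ := hb
      obtain ⟨hc1, hc2, hc3, hc4, hc5⟩ := hc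
      have key : 2*(m-i) + j < n := by omega
      have hblp : 1 ≤ b.length := by omega
      constructor
      · simp; omega
      constructor
      · simp [List.count_cons, List.count_append]; omega
      constructor
      · simp [List.count_cons, List.count_append]; omega
      constructor
      · intro p
        cases p with
        | zero => simp
        | succ q =>
          rw [List.take_succ_cons, List.take_append]
          rcases Nat.lt_or_ge q (b.length + 1) with hq | hq
          · have h0 : q - b.length = 0 := by omega
            rw [h0]
            simp [List.count_cons, List.count_append]
            have := hb4 q
            omega
          · rw [List.take_of_length_le (by omega),
              show q - b.length = (q - b.length - 1) + 1 by omega, List.take_succ_cons]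
            simp [List.count_cons, List.count_append]
            have := hc4 (q - b.length - 1)
            omega
      · intro hf
        rcases List.infix_cons_iff.mp hf with hp | hp
        · obtain ⟨r, hr⟩ := hp
          cases b with
          | nil => simp at hb1; omega
          | cons x xs =>
            simp only [List.cons_append, List.cons.injEq, List.append_eq] at hr
            obtain ⟨-, hx, -⟩ := hr
            subst hx
            exact not_start_cl hb4
        · rcases infix_decomp b c hp with h1 | h1 | ⟨x, hx⟩
          · exact hb5 h1
          · exact hc5 h1
          · exact not_end_op (by omega) hb4 hx

lemma mem_G_elim {n m i j : ℕ} {a : List RSym} (h : a ∈ G n m i j) :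
    ∃ b c, a = op :: (b ++ cl :: c) ∧ b.count cl = b.count op ∧
      (∀ p, (b.take p).count cl ≤ (b.take p).count op) ∧
      c.count op = i ∧ c.length = j := by
  simp only [G, Finset.mem_image] at h
  obtain ⟨⟨b, c⟩, hbc, he⟩ := h
  have hb : b ∈ F (n-2-j) (m-1-i) := (Finset.mem_product.mp hbc).1
  have hc : c ∈ F j i := (Finset.mem_product.mp hbc).2
  rw [mem_F] at hb hc
  exact ⟨b, c, he.symm, hb.2.2.1.trans hb.2.1.symm, hb.2.2.2.1, hc.2.1, hc.1⟩

lemma mem_G_eq {n m i j i' j' : ℕ} {a : List RSym}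
    (h : a ∈ G n m i j) (h' : a ∈ G n m i' j') : i = i' ∧ j = j' := by
  obtain ⟨b, c, rfl, hb1, hb2, hb3, hb4⟩ := mem_G_elim h
  obtain ⟨b', c', he, hb1', hb2', hb3', hb4'⟩ := mem_G_elim h'
  have he2 : b ++ cl :: c = b' ++ cl :: c' := by injection he
  obtain ⟨rfl, rfl⟩ := decomp_unique hb1 hb1' hb2 hb2' he2
  exact ⟨hb3.symm.trans hb3', hb4.symm.trans hb4'⟩

lemma card_G (n m i j : ℕ) :
    (G n m i j).card = (F (n-2-j) (m-1-i)).card * (F j i).card := by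
  rw [G, Finset.card_image_of_injOn, Finset.card_product]
  rintro ⟨b, c⟩ hbc ⟨b', c'⟩ hbc' he
  simp only [Finset.coe_product, Set.mem_prod, Finset.mem_coe] at hbc hbc'
  have hb := mem_F.mp hbc.1
  have hb' := mem_F.mp hbc'.1
  simp only at he
  have he2 : b ++ cl :: c = b' ++ cl :: c' := by injection he
  obtain ⟨rfl, rfl⟩ := decomp_unique (hb.2.2.1.trans hb.2.1.symm)
    (hb'.2.2.1.trans hb'.2.1.symm) hb.2.2.2.1 hb'.2.2.2.1 he2
  rfl

/-- For `n ≥ 1` and `m ≥ 1`,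
`S_n^m = S_{n-1}^m + Σ_{i=0}^{m-1} Σ_{j=2i}^{n-2(m-i)-1} S_{n-2-j}^{m-1-i} · S_j^i`
(an empty summation range contributes 0). -/
theorem rna_count_recurrence (n m : ℕ) (hn : 1 ≤ n) (hm : 1 ≤ m) :
    S n m = S (n - 1) m +
      ∑ i ∈ Finset.range m, ∑ j ∈ Finset.Ico (2 * i) (n - 2 * (m - i)),
        S (n - 2 - j) (m - 1 - i) * S j i := by
  have hst_inj : Function.Injective (fun x : List RSym => st :: x) := by
    intro x y h
    injection h
  have hdisj : Disjoint ((F (n-1) m).image (fun x => st :: x))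
      ((Finset.range m).biUnion (fun i =>
        (Finset.Ico (2*i) (n - 2*(m-i))).biUnion (G n m i))) := by
    rw [Finset.disjoint_left]
    intro a ha ha'
    rw [Finset.mem_image] at ha
    obtain ⟨x, -, rfl⟩ := ha
    rw [Finset.mem_biUnion] at ha'
    obtain ⟨i, -, ha'⟩ := ha'
    rw [Finset.mem_biUnion] at ha'
    obtain ⟨j, -, ha'⟩ := ha'
    obtain ⟨b, c, he, -⟩ := mem_G_elim ha'
    injection he with h1 _
    exact absurd h1 (by simp)
  have houter : ∀ i ∈ Finset.range m, ∀ i' ∈ Finset.range m, i ≠ i' →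
      Disjoint ((Finset.Ico (2*i) (n - 2*(m-i))).biUnion (G n m i))
        ((Finset.Ico (2*i') (n - 2*(m-i'))).biUnion (G n m i')) := by
    intro i _ i' _ hne
    rw [Finset.disjoint_left]
    intro a ha ha'
    rw [Finset.mem_biUnion] at ha ha'
    obtain ⟨j, -, ha⟩ := ha
    obtain ⟨j', -, ha'⟩ := ha'
    exact hne (mem_G_eq ha ha').1
  have hinner : ∀ i, ∀ j ∈ Finset.Ico (2*i) (n - 2*(m-i)),
      ∀ j' ∈ Finset.Ico (2*i) (n - 2*(m-i)), j ≠ j' →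
      Disjoint (G n m i j) (G n m i j') := by
    intro i j _ j' _ hne
    rw [Finset.disjoint_left]
    intro a ha ha'
    exact hne (mem_G_eq ha ha').2
  rw [S_eq, F_eq n m hn hm, Finset.card_union_of_disjoint hdisj,
    Finset.card_image_of_injective _ hst_inj, Finset.card_biUnion houter, ← S_eq]
  congr 1
  refine Finset.sum_congr rfl (fun i _ => ?_)
  rw [Finset.card_biUnion (hinner i)]
  refine Finset.sum_congr rfl (fun j _ => ?_)
  rw [card_G, ← S_eq, ← S_eq]
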